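/- Let (w_{i,j})_{1≤i≤m,1≤j≤n} be built from applying the rowRSK (or colRSK) growth rule inductively on the m × n grid with empty partitions on the axes, producing partitions λ^{(i,j)} at all lattice points. Then for each 1 ≤ k ≤ n, the sum of the entries in the k-th row of the matrix equals |λ^{(m,k)}| − |λ^{(m,k-1)}|, and for each 1 ≤ k ≤ m, the sum of the k-th column equals |λ^{(k,n)}| − |λ^{(k-1,n)}|. -/

import Mathlib

open scoped Classical

noncomputable section

/-! ## Partitions and interlacing -/

def IsPartition (a : ℕ → ℕ) : Prop :=
  (∀ i, a (i + 1) ≤ a i) ∧ ∃ N, ∀ i, N ≤ i → a i = 0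

/-- `Interlaces μ lam` means μ ≺ lam, i.e. lam_{i+1} ≤ μ_i ≤ lam_i (0-indexed). -/
def Interlaces (μ lam : ℕ → ℕ) : Prop :=
  ∀ i, lam (i + 1) ≤ μ i ∧ μ i ≤ lam i

def psum (a : ℕ → ℕ) : ℕ := ∑' i, a i

def plen (a : ℕ → ℕ) : ℕ := sInf {N | ∀ i, N ≤ i → a i = 0}

/-! ## rowRSK local rule -/

def rowRSK (α β κ : ℕ → ℕ) (G : ℕ) : ℕ → ℕ
  | 0 => max (α 0) (β 0) + G
  | s + 1 => max (α (s + 1)) (β (s + 1)) + min (α s) (β s) - κ s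

/-! ## colRSK local rule -/

def Gdesc (α β κ : ℕ → ℕ) (G L : ℕ) : ℕ → ℕ
  | 0 => G
  | k + 1 =>
      Gdesc α β κ G L k -
          min (Gdesc α β κ G L k) (κ (L - (k + 1)) - max (α (L - (k + 1) + 1)) (β (L - (k + 1) + 1)))
        + (min (α (L - (k + 1))) (β (L - (k + 1))) - κ (L - (k + 1)))

def colG (α β κ : ℕ → ℕ) (G s : ℕ) : ℕ :=
  Gdesc α β κ G (min (plen α) (plen β)) (min (plen α) (plen β) - s)

def colRSK (α β κ : ℕ → ℕ) (G : ℕ) : ℕ → ℕ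
  | 0 => max (α 0) (β 0) + colG α β κ G 0
  | s + 1 => min (max (α (s + 1)) (β (s + 1)) + colG α β κ G (s + 1)) (κ s)

def colGi (α β ν : ℕ → ℕ) : ℕ → ℕ
  | 0 => ν 0 - max (α 0) (β 0)
  | s + 1 =>
      ν (s + 1) + colGi α β ν s + max (min (α s) (β s) - colGi α β ν s) (ν (s + 1))
        - max (α (s + 1)) (β (s + 1)) - min (α s) (β s)

def colKinv (α β ν : ℕ → ℕ) (s : ℕ) : ℕ :=
  max (min (α s) (β s) - colGi α β ν s) (ν (s + 1))

def colGout (α β ν : ℕ → ℕ) : ℕ := colGi α β ν (min (plen α) (plen β))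

/-! ## Statements 0,1,2 -/

instance : TopologicalSpace (MvPowerSeries (Fin 2) ℚ) :=
  (inferInstance : TopologicalSpace ((Fin 2 →₀ ℕ) → ℚ))

def IsGT (n : ℕ) (z : ℕ → ℕ → ℕ) : Prop :=
  (∀ i j, n ≤ i ∨ i < j → z i j = 0) ∧
  (∀ i j, i + 1 < n → j ≤ i → z (i + 1) (j + 1) ≤ z i j ∧ z i j ≤ z (i + 1) j)

def gtType (z : ℕ → ℕ → ℕ) (i : ℕ) : ℕ :=
  (∑ j ∈ Finset.range (i + 1), z i j) - ∑ j ∈ Finset.range i, z (i - 1) j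

def hpolyN (n k : ℕ) : MvPolynomial ℕ ℚ :=
  ∑ f ∈ Finset.univ.filter (fun f : Fin k → Fin n => Monotone f),
    ∏ j : Fin k, MvPolynomial.X ((f j : ℕ) + 1)

def hZN (n : ℕ) (e : ℤ) : MvPolynomial ℕ ℚ := if 0 ≤ e then hpolyN n e.toNat else 0

def schurN (n : ℕ) (μ : YoungDiagram) : MvPolynomial ℕ ℚ :=
  Matrix.det (Matrix.of fun i j : Fin (μ.colLen 0) =>
    hZN n ((μ.rowLen (i : ℕ) : ℤ) - ((i : ℕ) : ℤ) + ((j : ℕ) : ℤ)))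

abbrev LP : Type := AddMonoidAlgebra ℚ (ℕ →₀ ℤ)

def lpX (i : ℕ) (e : ℤ) : LP := AddMonoidAlgebra.single (Finsupp.single i e) 1

def hListLP (l : List LP) (k : ℕ) : LP :=
  ∑ f ∈ Finset.univ.filter (fun f : Fin k → Fin l.length => Monotone f),
    ∏ j : Fin k, l.get (f j)

def hZLP (l : List LP) (e : ℤ) : LP := if 0 ≤ e then hListLP l e.toNat else 0

def varsSp (n : ℕ) : List LP := (List.range n).flatMap fun i => [lpX (i + 1) 1, lpX (i + 1) (-1)]

def varsSO (n : ℕ) : List LP := varsSp n ++ [1]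

def varsS (n : ℕ) : List LP := (List.range n).map fun i => lpX (i + 1) 1

def spChar (n : ℕ) (lam : ℕ → ℕ) : LP :=
  (1 / 2 : ℚ) • Matrix.det (Matrix.of fun i j : Fin n =>
    hZLP (varsSp n) ((lam (i : ℕ) : ℤ) - ((i : ℕ) : ℤ) + ((j : ℕ) : ℤ)) +
      hZLP (varsSp n) ((lam (i : ℕ) : ℤ) - ((i : ℕ) : ℤ) - ((j : ℕ) : ℤ)))

def soChar (n : ℕ) (lam : ℕ → ℕ) : LP :=
  Matrix.det (Matrix.of fun i j : Fin n =>
    hZLP (varsSO n) ((lam (i : ℕ) : ℤ) - ((i : ℕ) : ℤ) + ((j : ℕ) : ℤ)) -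
      hZLP (varsSO n) ((lam (i : ℕ) : ℤ) - ((i : ℕ) : ℤ) - ((j : ℕ) : ℤ) - 2))

def schurLP (n : ℕ) (lam : ℕ → ℕ) : LP :=
  Matrix.det (Matrix.of fun i j : Fin n =>
    hZLP (varsS n) ((lam (i : ℕ) : ℤ) - ((i : ℕ) : ℤ) + ((j : ℕ) : ℤ)))

def rect (n v : ℕ) : ℕ → ℕ := fun i => if i < n then v else 0

def UpRight (p : ℕ → ℕ × ℕ) (m : ℕ) : Prop :=
  ∀ k < m, p (k + 1) = ((p k).1 + 1, (p k).2) ∨ p (k + 1) = ((p k).1, (p k).2 + 1)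

def domP2PR (n : ℕ) : Finset (ℕ × ℕ) :=
  (Finset.Icc 1 n ×ˢ Finset.Icc 1 n).filter fun q => q.2 ≤ q.1

def wtP2PR (n : ℕ) (W : ℕ × ℕ → ℕ) : MvPolynomial ℕ ℚ :=
  ∏ q ∈ domP2PR n,
    (if q.1 = q.2 then MvPolynomial.X q.1 else MvPolynomial.X q.1 * MvPolynomial.X q.2) ^ W q

def PathP2PR (n : ℕ) (p : ℕ → ℕ × ℕ) : Prop :=
  p 0 = (1, 1) ∧ p (2 * n - 2) = (n, n) ∧ UpRight p (2 * n - 2) ∧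
    ∀ k ≤ 2 * n - 2, p k ∈ domP2PR n

def WsetP2PR (n u : ℕ) : Set ((ℕ × ℕ) → ℕ) :=
  {W | (∀ q ∉ domP2PR n, W q = 0) ∧
    ∀ p, PathP2PR n p → ∑ k ∈ Finset.range (2 * n - 1), W (p k) ≤ u}

def domP2L (n : ℕ) : Finset (ℕ × ℕ) :=
  (Finset.Icc 1 n ×ˢ Finset.Icc 1 n).filter fun q => q.1 + q.2 ≤ n + 1

def wtP2L (n : ℕ) (W : ℕ × ℕ → ℕ) : MvPolynomial ℕ ℚ :=
  ∏ q ∈ domP2L n, (MvPolynomial.X q.1 * MvPolynomial.X (n - q.2 + 1)) ^ W q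

def PathP2L (n : ℕ) (p : ℕ → ℕ × ℕ) : Prop :=
  p 0 = (1, 1) ∧ (p (n - 1)).1 + (p (n - 1)).2 = n + 1 ∧ UpRight p (n - 1) ∧
    ∀ k ≤ n - 1, p k ∈ domP2L n

def WsetP2L (n v : ℕ) : Set ((ℕ × ℕ) → ℕ) :=
  {W | (∀ q ∉ domP2L n, W q = 0) ∧
    ∀ p, PathP2L n p → ∑ k ∈ Finset.range n, W (p k) ≤ v}

def domP2HLR (n : ℕ) : Finset (ℕ × ℕ) :=
  (Finset.Icc 1 n ×ˢ Finset.Icc 1 (2 * n)).filter fun q => q.1 ≤ q.2 ∧ q.1 + q.2 ≤ 2 * n + 1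

def rowVar (n j : ℕ) : ℕ := if j ≤ n then j else 2 * n + 1 - j

def wtP2HLR (n : ℕ) (W : ℕ × ℕ → ℕ) : MvPolynomial ℕ ℚ :=
  ∏ q ∈ domP2HLR n,
    (if q.1 = q.2 then MvPolynomial.X q.1
      else MvPolynomial.X q.1 * MvPolynomial.X (rowVar n q.2)) ^ W q

def PathP2HLR (n : ℕ) (p : ℕ → ℕ × ℕ) : Prop :=
  p 0 = (1, 1) ∧ (p (2 * n - 1)).1 + (p (2 * n - 1)).2 = 2 * n + 1 ∧ UpRight p (2 * n - 1) ∧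
    ∀ k ≤ 2 * n - 1, p k ∈ domP2HLR n

def WsetP2HLR (n u : ℕ) : Set ((ℕ × ℕ) → ℕ) :=
  {W | (∀ q ∉ domP2HLR n, W q = 0) ∧
    ∀ p, PathP2HLR n p → ∑ k ∈ Finset.range (2 * n), W (p k) ≤ u}

def wtP2HLRlp (n : ℕ) (W : ℕ × ℕ → ℕ) : LP :=
  ∏ q ∈ domP2HLR n,
    (if q.1 = q.2 then lpX q.1 1 else lpX q.1 1 * lpX (rowVar n q.2) 1) ^ W q

def growRow (w : ℕ → ℕ → ℕ) : ℕ → ℕ → ℕ → ℕ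
  | 0, _ => fun _ => 0
  | _ + 1, 0 => fun _ => 0
  | i + 1, j + 1 =>
      rowRSK (growRow w i (j + 1)) (growRow w (i + 1) j) (growRow w i j) (w (i + 1) (j + 1))
  termination_by i j => (i, j)

def growCol (w : ℕ → ℕ → ℕ) : ℕ → ℕ → ℕ → ℕ
  | 0, _ => fun _ => 0
  | _ + 1, 0 => fun _ => 0
  | i + 1, j + 1 =>
      colRSK (growCol w i (j + 1)) (growCol w (i + 1) j) (growCol w i j) (w (i + 1) (j + 1))
  termination_by i j => (i, j)


/-!
Both local rules are size-preserving, `|ν| + |κ| = G + |α| + |β|`, as long as `κ ≺ α` and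
`κ ≺ β`; and their output again satisfies `α ≺ ν` and `β ≺ ν`, so the interlacing hypotheses
propagate through the whole grid. Induction over the grid then gives that `|λ^{(i,j)}|` is the
sum of the weights in the rectangle `[1, i] × [1, j]`, and the row and column sums are
differences of such rectangle sums.
-/

def EventuallyZero (a : ℕ → ℕ) : Prop := ∃ N, ∀ i, N ≤ i → a i = 0

lemma psum_eq_sum_range {a : ℕ → ℕ} {N : ℕ} (h : ∀ i, N ≤ i → a i = 0) :
    psum a = ∑ i ∈ Finset.range N, a i :=
  tsum_eq_sum fun i hi => h i (by simpa using hi)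

lemma plen_le {a : ℕ → ℕ} {N : ℕ} (h : ∀ i, N ≤ i → a i = 0) : plen a ≤ N :=
  Nat.sInf_le h

lemma apply_eq_zero_of_plen_le {a : ℕ → ℕ} (h : EventuallyZero a) {i : ℕ} (hi : plen a ≤ i) :
    a i = 0 :=
  Nat.sInf_mem (h : Set.Nonempty {N | ∀ i, N ≤ i → a i = 0}) i hi

namespace Interlaces

variable {μ lam : ℕ → ℕ}

lemma zero : Interlaces (fun _ => 0) (fun _ => 0) :=
  fun _ => ⟨le_rfl, le_rfl⟩

lemma le (h : Interlaces μ lam) (i : ℕ) : μ i ≤ lam i := (h i).2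

lemma eventuallyZero (h : Interlaces μ lam) (hμ : EventuallyZero μ) : EventuallyZero lam := by
  obtain ⟨N, hN⟩ := hμ
  refine ⟨N + 1, fun i hi => ?_⟩
  obtain ⟨j, rfl⟩ : ∃ j, i = j + 1 := ⟨i - 1, by omega⟩
  have := (h j).1
  have := hN j (by omega)
  omega

end Interlaces

lemma interlaces_of_le_min_of_max_le {α β ν : ℕ → ℕ}
    (h : ∀ s, ν (s + 1) ≤ min (α s) (β s) ∧ max (α s) (β s) ≤ ν s) :
    Interlaces α ν ∧ Interlaces β ν := by
  simp only [Interlaces, le_min_iff, max_le_iff] at h ⊢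
  exact ⟨fun s => ⟨(h s).1.1, (h s).2.1⟩, fun s => ⟨(h s).1.2, (h s).2.2⟩⟩

section LocalRule

variable {α β κ ν : ℕ → ℕ} {G : ℕ}

/-- `c s` is the weight carried into row `s` of the output: constantly `G` for `rowRSK`,
`colG α β κ G s` for `colRSK`. -/
lemma sum_range_add_sum_range_of_carry (c : ℕ → ℕ) (h0 : ν 0 = max (α 0) (β 0) + c 0)
    (hstep : ∀ s, c s + ν (s + 1) + κ s = c (s + 1) + max (α (s + 1)) (β (s + 1)) + min (α s) (β s))
    (N : ℕ) :
    ∑ s ∈ Finset.range (N + 1), ν s + ∑ s ∈ Finset.range N, κ s + min (α N) (β N)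
      = c N + ∑ s ∈ Finset.range (N + 1), α s + ∑ s ∈ Finset.range (N + 1), β s := by
  induction N with
  | zero =>
    simp only [zero_add, Finset.sum_range_one, Finset.range_zero, Finset.sum_empty, h0]
    omega
  | succ N ih =>
    rw [Finset.sum_range_succ (f := ν), Finset.sum_range_succ (f := κ),
      Finset.sum_range_succ (f := α), Finset.sum_range_succ (f := β)]
    have := hstep N
    omega

lemma psum_add_psum_of_carry (c : ℕ → ℕ) (hα : EventuallyZero α) (hβ : EventuallyZero β)
    (hκα : Interlaces κ α) (hαν : Interlaces α ν) (h0 : ν 0 = max (α 0) (β 0) + c 0)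
    (hstep : ∀ s, c s + ν (s + 1) + κ s = c (s + 1) + max (α (s + 1)) (β (s + 1)) + min (α s) (β s))
    (hc : ∀ N, (∀ i, N ≤ i → α i = 0) → c N = G) :
    psum ν + psum κ = G + psum α + psum β := by
  obtain ⟨Na, ha⟩ := hα
  obtain ⟨Nb, hb⟩ := hβ
  set N := max Na Nb
  have hα0 : ∀ i, N ≤ i → α i = 0 := fun i hi => ha i (by omega)
  have hβ0 : ∀ i, N + 1 ≤ i → β i = 0 := fun i hi => hb i (by omega)
  have hκ0 : ∀ i, N ≤ i → κ i = 0 := fun i hi => by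
    have := hκα.le i
    have := hα0 i hi
    omega
  have hν0 : ∀ i, N + 1 ≤ i → ν i = 0 := fun i hi => by
    obtain ⟨j, rfl⟩ : ∃ j, i = j + 1 := ⟨i - 1, by omega⟩
    have := (hαν j).1
    have := hα0 j (by omega)
    omega
  have hsum := sum_range_add_sum_range_of_carry c h0 hstep N
  rw [hc N hα0, hα0 N le_rfl, Nat.zero_min, add_zero] at hsum
  rw [psum_eq_sum_range hν0, psum_eq_sum_range hκ0, psum_eq_sum_range hβ0,
    psum_eq_sum_range (N := N + 1) fun i hi => hα0 i (by omega), hsum]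

lemma rowRSK_interlaces (hα : Interlaces κ α) (hβ : Interlaces κ β) :
    Interlaces α (rowRSK α β κ G) ∧ Interlaces β (rowRSK α β κ G) := by
  refine interlaces_of_le_min_of_max_le fun s => ⟨?_, ?_⟩
  · have := hα s; have := hβ s
    simp only [rowRSK]
    omega
  · cases s with
    | zero => simp only [rowRSK]; omega
    | succ t =>
      have := hα t; have := hβ t
      simp only [rowRSK]
      omega

lemma psum_rowRSK (hα : EventuallyZero α) (hβ : EventuallyZero β)
    (hκα : Interlaces κ α) (hκβ : Interlaces κ β) :
    psum (rowRSK α β κ G) + psum κ = G + psum α + psum β := by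
  refine psum_add_psum_of_carry (fun _ => G) hα hβ hκα (rowRSK_interlaces hκα hκβ).1 rfl
    (fun s => ?_) fun _ _ => rfl
  have := hκα s; have := hκβ s
  simp only [rowRSK]
  omega

lemma colRSK_interlaces (hα : Interlaces κ α) (hβ : Interlaces κ β) :
    Interlaces α (colRSK α β κ G) ∧ Interlaces β (colRSK α β κ G) := by
  refine interlaces_of_le_min_of_max_le fun s => ⟨?_, ?_⟩
  · have := hα s; have := hβ s
    simp only [colRSK]
    omega
  · cases s with
    | zero => simp only [colRSK]; omega
    | succ t =>
      have := hα t; have := hβ t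
      simp only [colRSK]
      omega

lemma colG_of_lt {s : ℕ} (hs : s < min (plen α) (plen β)) :
    colG α β κ G s
      = colG α β κ G (s + 1) - min (colG α β κ G (s + 1)) (κ s - max (α (s + 1)) (β (s + 1)))
        + (min (α s) (β s) - κ s) := by
  have h1 : min (plen α) (plen β) - s = min (plen α) (plen β) - (s + 1) + 1 := by omega
  have h2 : min (plen α) (plen β) - (min (plen α) (plen β) - (s + 1) + 1) = s := by omega
  rw [colG, h1, Gdesc, h2, colG]

lemma colG_of_le {s : ℕ} (hs : min (plen α) (plen β) ≤ s) : colG α β κ G s = G := by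
  rw [colG, Nat.sub_eq_zero_of_le hs, Gdesc]

lemma colG_add_colRSK_succ (hα : EventuallyZero α) (hβ : EventuallyZero β)
    (hκα : Interlaces κ α) (hκβ : Interlaces κ β) (s : ℕ) :
    colG α β κ G s + colRSK α β κ G (s + 1) + κ s
      = colG α β κ G (s + 1) + max (α (s + 1)) (β (s + 1)) + min (α s) (β s) := by
  have := hκα s; have := hκβ s
  rw [colRSK]
  rcases lt_or_ge s (min (plen α) (plen β)) with hs | hs
  · rw [colG_of_lt hs]
    omega
  · have hmin : min (α s) (β s) = 0 := by
      rcases min_le_iff.mp hs with h | h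
      · simp [apply_eq_zero_of_plen_le hα h]
      · simp [apply_eq_zero_of_plen_le hβ h]
    rw [colG_of_le hs, colG_of_le (by omega)]
    omega

lemma psum_colRSK (hα : EventuallyZero α) (hβ : EventuallyZero β)
    (hκα : Interlaces κ α) (hκβ : Interlaces κ β) :
    psum (colRSK α β κ G) + psum κ = G + psum α + psum β :=
  psum_add_psum_of_carry (colG α β κ G) hα hβ hκα (colRSK_interlaces hκα hκβ).1 rfl
    (colG_add_colRSK_succ hα hβ hκα hκβ)
    fun _ hN => colG_of_le ((min_le_left _ _).trans (plen_le hN))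

end LocalRule

structure IsGrowthRule (R : (ℕ → ℕ) → (ℕ → ℕ) → (ℕ → ℕ) → ℕ → ℕ → ℕ) : Prop where
  interlaces : ∀ {α β κ G}, Interlaces κ α → Interlaces κ β →
    Interlaces α (R α β κ G) ∧ Interlaces β (R α β κ G)
  psum_add_psum : ∀ {α β κ G}, EventuallyZero α → EventuallyZero β →
    Interlaces κ α → Interlaces κ β → psum (R α β κ G) + psum κ = G + psum α + psum β

lemma isGrowthRule_rowRSK : IsGrowthRule rowRSK := ⟨rowRSK_interlaces, psum_rowRSK⟩

lemma isGrowthRule_colRSK : IsGrowthRule colRSK := ⟨colRSK_interlaces, psum_colRSK⟩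

structure IsGrowthDiagram (R : (ℕ → ℕ) → (ℕ → ℕ) → (ℕ → ℕ) → ℕ → ℕ → ℕ)
    (w : ℕ → ℕ → ℕ) (g : ℕ → ℕ → ℕ → ℕ) : Prop where
  zero_left : ∀ j, g 0 j = fun _ => 0
  zero_right : ∀ i, g (i + 1) 0 = fun _ => 0
  succ_succ : ∀ i j, g (i + 1) (j + 1) = R (g i (j + 1)) (g (i + 1) j) (g i j) (w (i + 1) (j + 1))

lemma isGrowthDiagram_growRow (w : ℕ → ℕ → ℕ) : IsGrowthDiagram rowRSK w (growRow w) :=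
  ⟨fun _ => by rw [growRow], fun _ => by rw [growRow], fun _ _ => by rw [growRow]⟩

lemma isGrowthDiagram_growCol (w : ℕ → ℕ → ℕ) : IsGrowthDiagram colRSK w (growCol w) :=
  ⟨fun _ => by rw [growCol], fun _ => by rw [growCol], fun _ _ => by rw [growCol]⟩

def rectSum (w : ℕ → ℕ → ℕ) (i j : ℕ) : ℕ :=
  ∑ a ∈ Finset.Icc 1 i, ∑ b ∈ Finset.Icc 1 j, w a b

lemma rectSum_succ_right (w : ℕ → ℕ → ℕ) (i j : ℕ) :
    rectSum w i (j + 1) = rectSum w i j + ∑ a ∈ Finset.Icc 1 i, w a (j + 1) := by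
  simp only [rectSum, ← Finset.sum_add_distrib, Finset.sum_Icc_succ_top (Nat.le_add_left 1 j)]

lemma rectSum_succ_left (w : ℕ → ℕ → ℕ) (i j : ℕ) :
    rectSum w (i + 1) j = rectSum w i j + ∑ b ∈ Finset.Icc 1 j, w (i + 1) b :=
  Finset.sum_Icc_succ_top (Nat.le_add_left 1 i) _

namespace IsGrowthDiagram

variable {R : (ℕ → ℕ) → (ℕ → ℕ) → (ℕ → ℕ) → ℕ → ℕ → ℕ} {w : ℕ → ℕ → ℕ} {g : ℕ → ℕ → ℕ → ℕ}

lemma interlaces (hR : IsGrowthRule R) (hg : IsGrowthDiagram R w g) (i j : ℕ) :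
    Interlaces (g i j) (g (i + 1) j) ∧ Interlaces (g i j) (g i (j + 1)) := by
  have step : ∀ i j, Interlaces (g i j) (g (i + 1) j) → Interlaces (g i j) (g i (j + 1)) →
      Interlaces (g i (j + 1)) (g (i + 1) (j + 1)) ∧ Interlaces (g (i + 1) j) (g (i + 1) (j + 1)) :=
    fun i j h₁ h₂ => hg.succ_succ i j ▸ hR.interlaces h₂ h₁
  induction i generalizing j with
  | zero =>
    induction j with
    | zero =>
      rw [hg.zero_left, hg.zero_left, hg.zero_right]
      exact ⟨Interlaces.zero, Interlaces.zero⟩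
    | succ j ih =>
      refine ⟨(step 0 j ih.1 ih.2).1, ?_⟩
      rw [hg.zero_left, hg.zero_left]
      exact Interlaces.zero
  | succ i ihi =>
    induction j with
    | zero =>
      refine ⟨?_, (step i 0 (ihi 0).1 (ihi 0).2).2⟩
      rw [hg.zero_right, hg.zero_right]
      exact Interlaces.zero
    | succ j ihj =>
      exact ⟨(step (i + 1) j ihj.1 ihj.2).1, (step i (j + 1) (ihi (j + 1)).1 (ihi (j + 1)).2).2⟩

lemma eventuallyZero (hR : IsGrowthRule R) (hg : IsGrowthDiagram R w g) (i j : ℕ) :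
    EventuallyZero (g i j) := by
  induction i with
  | zero => exact hg.zero_left j ▸ ⟨0, fun _ _ => rfl⟩
  | succ i ih => exact ((hg.interlaces hR i j).1).eventuallyZero ih

lemma psum_eq_rectSum (hR : IsGrowthRule R) (hg : IsGrowthDiagram R w g) (i j : ℕ) :
    psum (g i j) = rectSum w i j := by
  induction i generalizing j with
  | zero => simp [hg.zero_left, psum, rectSum]
  | succ i ihi =>
    induction j with
    | zero => simp [hg.zero_right, psum, rectSum]
    | succ j ihj =>
      have hsize := hg.succ_succ i j ▸ hR.psum_add_psum (G := w (i + 1) (j + 1))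
        (hg.eventuallyZero hR i (j + 1)) (hg.eventuallyZero hR (i + 1) j)
        (hg.interlaces hR i j).2 (hg.interlaces hR i j).1
      rw [ihi, ihj, ihi, rectSum_succ_left] at hsize
      rw [rectSum_succ_left, Finset.sum_Icc_succ_top (Nat.le_add_left 1 j)]
      omega

end IsGrowthDiagram

open Filter MeasureTheory in

theorem stmt17_general (m n : ℕ) (w : ℕ → ℕ → ℕ) :
    (∀ k, 1 ≤ k → k ≤ n →
      psum (growRow w m (k - 1)) + (∑ i ∈ Finset.Icc 1 m, w i k) = psum (growRow w m k) ∧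
      psum (growCol w m (k - 1)) + (∑ i ∈ Finset.Icc 1 m, w i k) = psum (growCol w m k)) ∧
    (∀ k, 1 ≤ k → k ≤ m →
      psum (growRow w (k - 1) n) + (∑ j ∈ Finset.Icc 1 n, w k j) = psum (growRow w k n) ∧
      psum (growCol w (k - 1) n) + (∑ j ∈ Finset.Icc 1 n, w k j) = psum (growCol w k n)) := by
  have hrow := (isGrowthDiagram_growRow w).psum_eq_rectSum isGrowthRule_rowRSK
  have hcol := (isGrowthDiagram_growCol w).psum_eq_rectSum isGrowthRule_colRSK
  refine ⟨fun k hk _ => ?_, fun k hk _ => ?_⟩ <;>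
    obtain ⟨k, rfl⟩ : ∃ k', k = k' + 1 := ⟨k - 1, by omega⟩ <;>
    simp only [hrow, hcol, rectSum_succ_right, rectSum_succ_left, Nat.add_sub_cancel, and_self]

open Filter MeasureTheory in
theorem stmt17 (m n : ℕ) (hm : 0 < m) (hn : 0 < n) (w : ℕ → ℕ → ℕ) :
    (∀ k, 1 ≤ k → k ≤ n →
      psum (growRow w m (k - 1)) + (∑ i ∈ Finset.Icc 1 m, w i k) = psum (growRow w m k) ∧
      psum (growCol w m (k - 1)) + (∑ i ∈ Finset.Icc 1 m, w i k) = psum (growCol w m k)) ∧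
    (∀ k, 1 ≤ k → k ≤ m →
      psum (growRow w (k - 1) n) + (∑ j ∈ Finset.Icc 1 n, w k j) = psum (growRow w k n) ∧
      psum (growCol w (k - 1) n) + (∑ j ∈ Finset.Icc 1 n, w k j) = psum (growCol w k n)) :=
  stmt17_general m n w


end
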